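/- arXiv:2306.06838 — 6 statements merged into one kernel-verified Lean document; each statement's English description precedes it below -/
import Mathlib

section
/- Let φ : A → B be a homomorphism of commutative rings, let f ∈ A be a nonzerodivisor and g ∈ B a nonzerodivisor such that φ(f) divides g. Then the induced ring homomorphism A[f⁻¹] → B[g⁻¹] (determined by φ and sending f⁻¹ to (g/φ(f))·g⁻¹) maps the submodule MO(A,f) into the submodule MO(B,g). -/
/-- `MO(A,f)`: the subset of the localization `L` (with localization map `ι : A →+* L`)
consisting of those `x` with `ι f * x = ι a` for some `a` in the radical of `(f)`;
i.e. the set of elements `a / f` with `a ∈ √(f)`. -/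
def MOset {A L : Type*} [CommRing A] [CommRing L] (ι : A →+* L) (f : A) : Set L :=
  {x | ∃ a ∈ (Ideal.span {f}).radical, ι a = ι f * x}

/-- If `φ : A → B` is a ring homomorphism, `f ∈ A` and `g ∈ B` are
nonzerodivisors with `φ f ∣ g`, then the induced ring homomorphism
`A[f⁻¹] → B[g⁻¹]` (the unique `ψ` compatible with `φ` and the localization maps)
maps `MO(A,f)` into `MO(B,g)`. -/
theorem stmt0 {A B : Type*} [CommRing A] [CommRing B] (φ : A →+* B) (f : A) (g : B)
    (hf : f ∈ nonZeroDivisors A) (hg : g ∈ nonZeroDivisors B) (hdvd : φ f ∣ g)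
    (ψ : Localization.Away f →+* Localization.Away g)
    (hψ : ψ.comp (algebraMap A (Localization.Away f)) =
      (algebraMap B (Localization.Away g)).comp φ) :
    Set.MapsTo ψ (MOset (algebraMap A (Localization.Away f)) f)
      (MOset (algebraMap B (Localization.Away g)) g) := by
  intro x hx
  obtain ⟨a, ha, hax⟩ := hx
  obtain ⟨c, hc⟩ := hdvd
  obtain ⟨n, hn⟩ := ha
  obtain ⟨b, hb⟩ := Ideal.mem_span_singleton'.mp hn
  refine ⟨φ a * c, ⟨n + 1, Ideal.mem_span_singleton'.mpr ⟨φ b * φ a * c ^ n, ?_⟩⟩, ?_⟩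
  · have h1 : φ a ^ n = φ b * φ f := by rw [← map_pow, ← hb, map_mul]
    calc φ b * φ a * c ^ n * g = φ b * φ a * c ^ n * (φ f * c) := by rw [← hc]
      _ = (φ b * φ f) * (φ a * c ^ (n + 1)) := by ring
      _ = φ a ^ n * (φ a * c ^ (n + 1)) := by rw [h1]
      _ = (φ a * c) ^ (n + 1) := by ring
  · have hψa : ∀ y : A, ψ (algebraMap A (Localization.Away f) y) =
        algebraMap B (Localization.Away g) (φ y) := fun y => RingHom.congr_fun hψ y
    have := congrArg ψ hax
    rw [map_mul, hψa, hψa] at this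
    have hg2 : (algebraMap B (Localization.Away g)) g =
        (algebraMap B (Localization.Away g)) (φ f) * (algebraMap B (Localization.Away g)) c := by
      rw [← map_mul, ← hc]
    rw [map_mul, this, hg2]
    ring
end

section
/- Let A be a commutative ring, f ∈ A a nonzerodivisor, and A → B a faithfully flat ring homomorphism (so that the images of f in B and in B ⊗_A B are again nonzerodivisors). Then the sequence 0 → MO(A, f) → MO(B, f) → MO(B ⊗_A B, f) is exact, where the first map is induced by A → B, and the second map is the difference of the two maps induced by b ↦ b ⊗ 1 and b ↦ 1 ⊗ b. Concretely: the map MO(A,f) → MO(B,f) is injective, and its image is exactly the set of elements of MO(B,f) on which the two maps to MO(B ⊗_A B, f) agree. -/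
/-!
An element of `MO(B,f)` is `y = b/f` with `b ∈ √(fB)`. Since `f` stays a nonzerodivisor on the
flat `A`-algebras `B` and `B ⊗[A] B`, these rings embed into their localizations at `f`, so
`ψ₁ y = ψ₂ y` forces `b ⊗ 1 = 1 ⊗ b`. Faithfully flat descent gives `b = a` for some `a ∈ A`,
and since faithfully flat extensions contract ideals back to themselves, `√(fB) ∩ A = √(f)`;
hence `y` is the image of `a/f ∈ MO(A,f)`. Injectivity holds because `A → B[1/f]` is injective.
-/

open TensorProduct

lemma algebraMap_mem_nonZeroDivisors_of_flat {A : Type*} (B : Type*) [CommRing A] [CommRing B]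
    [Algebra A B] [Module.Flat A B] {f : A} (hf : f ∈ nonZeroDivisors A) :
    algebraMap A B f ∈ nonZeroDivisors B :=
  mem_nonZeroDivisors_iff_right.mpr fun x hx ↦
    (Module.Flat.isSMulRegular_of_nonZeroDivisors (M := B) hf).right_eq_zero_of_smul <| by
      rwa [Algebra.smul_def, mul_comm]

lemma algebraMap_away_injective_of_flat {A : Type*} (B : Type*) [CommRing A] [CommRing B]
    [Algebra A B] [Module.Flat A B] {f : A} (hf : f ∈ nonZeroDivisors A) :
    Function.Injective (algebraMap B (Localization.Away (algebraMap A B f))) :=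
  IsLocalization.injective _
    (Submonoid.powers_le.mpr (algebraMap_mem_nonZeroDivisors_of_flat B hf))

lemma IsLocalization.injective_of_injective_comp_algebraMap {R S T : Type*} [CommRing R]
    [CommRing S] [CommRing T] [Algebra R S] (M : Submonoid R) [IsLocalization M S]
    (ψ : S →+* T) (h : Function.Injective (ψ.comp (algebraMap R S))) : Function.Injective ψ :=
  IsLocalization.injective_of_map_algebraMap_zero (M := M) S ψ fun x hx ↦ by
    rw [(h.eq_iff' (map_zero _)).mp hx, map_zero]

section FaithfullyFlat

variable {A B : Type*} [CommRing A] [CommRing B] [Algebra A B] [Module.FaithfullyFlat A B]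

lemma Module.FaithfullyFlat.exists_algebraMap_eq_of_tmul_one_eq_one_tmul {b : B}
    (h : b ⊗ₜ[A] (1 : B) = 1 ⊗ₜ[A] b) : ∃ a, algebraMap A B a = b := by
  let N := LinearMap.range (Algebra.linearMap A B)
  have h1 : N.mkQ 1 = 0 := (Submodule.Quotient.mk_eq_zero N).mpr ⟨1, map_one (algebraMap A B)⟩
  have hb := congrArg (LinearMap.lTensor B N.mkQ) h
  simp only [LinearMap.lTensor_tmul, h1, tmul_zero, eq_comm (a := (0 : B ⊗[A] (B ⧸ N))),
    Submodule.mkQ_apply, Module.FaithfullyFlat.one_tmul_eq_zero_iff,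
    Submodule.Quotient.mk_eq_zero] at hb
  exact hb

lemma Ideal.comap_radical_map_eq_radical_of_faithfullyFlat (I : Ideal A) :
    ((I.map (algebraMap A B)).radical).comap (algebraMap A B) = I.radical := by
  rw [Ideal.comap_radical, Ideal.comap_map_eq_self_of_faithfullyFlat]

lemma Module.FaithfullyFlat.exists_mem_radical_algebraMap_eq {f : A} {b : B}
    (hb : b ∈ (Ideal.span {algebraMap A B f}).radical) (h : b ⊗ₜ[A] (1 : B) = 1 ⊗ₜ[A] b) :
    ∃ a ∈ (Ideal.span {f}).radical, algebraMap A B a = b := by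
  obtain ⟨a, rfl⟩ := exists_algebraMap_eq_of_tmul_one_eq_one_tmul h
  refine ⟨a, ?_, rfl⟩
  rw [← Ideal.comap_radical_map_eq_radical_of_faithfullyFlat (B := B), Ideal.map_span,
    Set.image_singleton]
  exact hb

end FaithfullyFlat

lemma exists_mem_MOset_eq_of_comp_algebraMap_eq {A L L' : Type*} [CommRing A] [CommRing L]
    [CommRing L'] [Algebra A L] {f : A} [IsLocalization.Away f L] {ψ : L →+* L'} {g : A →+* L'}
    (hψ : ψ.comp (algebraMap A L) = g) {a : A} (ha : a ∈ (Ideal.span {f}).radical) {y : L'}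
    (hy : g a = g f * y) : ∃ x ∈ MOset (algebraMap A L) f, ψ x = y := by
  have hψ' (c : A) : ψ (algebraMap A L c) = g c := by rw [← hψ, RingHom.comp_apply]
  refine ⟨algebraMap A L a * IsLocalization.Away.invSelf f, ⟨a, ha, ?_⟩, ?_⟩
  · rw [mul_left_comm, IsLocalization.Away.mul_invSelf, mul_one]
  · have hunit : IsUnit (g f) := hψ' f ▸ (IsLocalization.Away.algebraMap_isUnit f).map ψ
    refine hunit.mul_left_cancel ?_
    rw [← hy, ← hψ', ← hψ', ← map_mul, mul_left_comm, IsLocalization.Away.mul_invSelf, mul_one]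

/-- If `A → B` is faithfully flat and `f ∈ A` is a nonzerodivisor, then
`0 → MO(A,f) → MO(B,f) → MO(B ⊗[A] B, f)` is exact: the map `MO(A,f) → MO(B,f)`
(induced by `A → B` via the unique compatible map `ψ` on localizations) is injective,
and its image consists exactly of the elements of `MO(B,f)` on which the two maps
`ψ₁, ψ₂` induced by `b ↦ b ⊗ 1` and `b ↦ 1 ⊗ b` agree. -/
theorem stmt1 {A B : Type*} [CommRing A] [CommRing B] [Algebra A B]
    [Module.FaithfullyFlat A B] (f : A) (hf : f ∈ nonZeroDivisors A)
    (ψ : Localization.Away f →+* Localization.Away (algebraMap A B f))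
    (hψ : ψ.comp (algebraMap A (Localization.Away f)) =
      (algebraMap B (Localization.Away (algebraMap A B f))).comp (algebraMap A B))
    (ψ₁ ψ₂ : Localization.Away (algebraMap A B f) →+*
      Localization.Away (algebraMap A (B ⊗[A] B) f))
    (hψ₁ : ψ₁.comp (algebraMap B (Localization.Away (algebraMap A B f))) =
      (algebraMap (B ⊗[A] B) (Localization.Away (algebraMap A (B ⊗[A] B) f))).comp
        (Algebra.TensorProduct.includeLeft (S := A) : B →ₐ[A] B ⊗[A] B).toRingHom)
    (hψ₂ : ψ₂.comp (algebraMap B (Localization.Away (algebraMap A B f))) =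
      (algebraMap (B ⊗[A] B) (Localization.Away (algebraMap A (B ⊗[A] B) f))).comp
        (Algebra.TensorProduct.includeRight : B →ₐ[A] B ⊗[A] B).toRingHom) :
    Set.InjOn ψ (MOset (algebraMap A (Localization.Away f)) f) ∧
      ∀ y ∈ MOset (algebraMap B (Localization.Away (algebraMap A B f))) (algebraMap A B f),
        (ψ₁ y = ψ₂ y ↔ ∃ x ∈ MOset (algebraMap A (Localization.Away f)) f, ψ x = y) := by
  have hψ_inj : Function.Injective ψ :=
    IsLocalization.injective_of_injective_comp_algebraMap (Submonoid.powers f) ψ <| by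
      rw [hψ]
      exact (algebraMap_away_injective_of_flat B hf).comp (FaithfulSMul.algebraMap_injective A B)
  have hcomm : ψ₁.comp ((algebraMap B _).comp (algebraMap A B)) =
      ψ₂.comp ((algebraMap B _).comp (algebraMap A B)) := by
    rw [← RingHom.comp_assoc, ← RingHom.comp_assoc, hψ₁, hψ₂, RingHom.comp_assoc,
      RingHom.comp_assoc]
    congr 1
    ext a
    exact Algebra.TensorProduct.tmul_one_eq_one_tmul a
  have hψ₁ψ₂ : ψ₁.comp ψ = ψ₂.comp ψ := IsLocalization.ringHom_ext (Submonoid.powers f) <| by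
    rwa [RingHom.comp_assoc, RingHom.comp_assoc, hψ]
  refine ⟨hψ_inj.injOn, fun y ⟨b, hb, hby⟩ ↦ ⟨fun h ↦ ?_, ?_⟩⟩
  · have hb_eq : b ⊗ₜ[A] 1 = 1 ⊗ₜ[A] b := algebraMap_away_injective_of_flat (B ⊗[A] B) hf <| by
      have e₁ := congrArg ψ₁ hby
      have e₂ := congrArg ψ₂ hby
      simp only [map_mul, ← RingHom.comp_apply, hψ₁, hψ₂] at e₁ e₂
      rw [hcomm, h] at e₁
      exact e₁.trans e₂.symm
    obtain ⟨a, ha, rfl⟩ := Module.FaithfullyFlat.exists_mem_radical_algebraMap_eq hb hb_eq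
    exact exists_mem_MOset_eq_of_comp_algebraMap_eq hψ ha hby
  · rintro ⟨x, -, rfl⟩
    exact RingHom.congr_fun hψ₁ψ₂ x
end

section
/- Let A be a Noetherian integrally closed (normal) integral domain and f ∈ A a nonzero element. Then, as subsets of the fraction field Frac(A), MO(A, f) = ⋂_p MO(A_p, f), where the intersection is over all prime ideals p of A of height one, A_p is the localization of A at p, and MO(A_p, f) is regarded as a subset of Frac(A) via the canonical inclusions A_p[f⁻¹] ⊆ Frac(A). -/
lemma primeCompl_le_nonZeroDivisors {A : Type*} [CommRing A] [IsDomain A]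
    (p : PrimeSpectrum A) :
    p.asIdeal.primeCompl ≤ (nonZeroDivisors A).comap (RingHom.id A) := by
  intro a ha
  simp only [Submonoid.mem_comap, RingHom.id_apply]
  exact mem_nonZeroDivisors_of_ne_zero fun h => ha (h ▸ p.asIdeal.zero_mem)

/-- The canonical inclusion `A_p → Frac(A)` for a prime `p` of a domain `A`. -/
noncomputable def atPrimeToFractionField {A : Type*} [CommRing A] [IsDomain A]
    (K : Type*) [Field K] [Algebra A K] [IsFractionRing A K] (p : PrimeSpectrum A) :
    Localization.AtPrime p.asIdeal →+* K :=
  IsLocalization.map (S := Localization.AtPrime p.asIdeal) K (RingHom.id A)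
    (primeCompl_le_nonZeroDivisors p)

open IsLocalRing

theorem IsLocalRing.maximalIdeal_isPrincipal_of_le_colon {R : Type*} [CommRing R] [IsDomain R]
    [IsNoetherianRing R] [IsLocalRing R] [IsIntegrallyClosed R] {h g : R} (hh : h ≠ 0)
    (hg : g ∉ Ideal.span {h}) (hm : maximalIdeal R ≤ (Ideal.span {h}).colon {g}) :
    (maximalIdeal R).IsPrincipal := by
  have hquot : ∀ z ∈ maximalIdeal R, ∃ c, z * g = h * c := fun z hz =>
    Ideal.mem_span_singleton.mp (Submodule.mem_colon_singleton.mp (hm hz))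
  by_cases hunit : ∃ z₀ ∈ maximalIdeal R, ∃ c₀, z₀ * g = h * c₀ ∧ IsUnit c₀
  · obtain ⟨z₀, hz₀, c₀, hzc₀, hc₀⟩ := hunit
    refine ⟨z₀, le_antisymm (fun z hz => ?_) (Ideal.span_le.mpr (by simpa using hz₀))⟩
    obtain ⟨c, hzc⟩ := hquot z hz
    have key : c₀ * z = z₀ * c :=
      mul_left_cancel₀ hh (by linear_combination (-z) * hzc₀ + z₀ * hzc)
    exact Ideal.mem_span_singleton.mpr (hc₀.dvd_mul_left.mp ⟨c, key⟩)
  · push Not at hunit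
    exfalso
    let K := FractionRing R
    let x : K := algebraMap R K g / algebraMap R K h
    have hh' : algebraMap R K h ≠ 0 := IsFractionRing.to_map_ne_zero_of_mem_nonZeroDivisors
      (mem_nonZeroDivisors_of_ne_zero hh)
    have hx : ∀ z c, z * g = h * c → x * algebraMap R K z = algebraMap R K c := by
      intro z c hzc
      rw [div_mul_eq_mul_div, div_eq_iff hh', ← map_mul, ← map_mul, mul_comm g, hzc, mul_comm]
    have hint : IsIntegral R x := by
      refine isIntegral_of_smul_mem_submodule
        (Submodule.map (Algebra.linearMap R K) (maximalIdeal R))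
        ?_ ((IsNoetherian.noetherian _).map _) x ?_
      · have hhm : h ∈ maximalIdeal R := fun hu => hg (Ideal.mem_span_singleton.mpr hu.dvd)
        exact Submodule.ne_bot_iff _ |>.mpr ⟨_, ⟨h, hhm, rfl⟩, hh'⟩
      · rintro _ ⟨z, hz, rfl⟩
        obtain ⟨c, hzc⟩ := hquot z hz
        exact ⟨c, hunit z hz c hzc, (hx z c hzc).symm⟩
    obtain ⟨r, hr⟩ := IsIntegrallyClosed.isIntegral_iff.mp hint
    refine hg (Ideal.mem_span_singleton'.mpr ⟨r, IsFractionRing.injective R K ?_⟩)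
    rw [map_mul, hr, div_mul_cancel₀ _ hh']

theorem Ideal.height_eq_one_of_isPrime_colon {A : Type*} [CommRing A] [IsDomain A]
    [IsNoetherianRing A] [IsIntegrallyClosed A] {h g : A} (hh : h ≠ 0)
    [hP : ((Ideal.span {h}).colon {g}).IsPrime] : ((Ideal.span {h}).colon {g}).height = 1 := by
  set P := (Ideal.span {h}).colon {g}
  have hhP : h ∈ P :=
    Submodule.mem_colon_singleton.mpr (Ideal.mul_mem_right _ _ (Ideal.mem_span_singleton_self h))
  have hg : g ∉ Ideal.span {h} := fun hg =>
    hP.ne_top ((Submodule.colon_eq_top_iff_subset _).mpr (by simpa using hg))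
  let R := Localization.AtPrime P
  let φ := algebraMap A R
  have : IsIntegrallyClosed R :=
    isIntegrallyClosed_of_isLocalization R P.primeCompl P.primeCompl_le_nonZeroDivisors
  have hφh : φ h ≠ 0 := (map_ne_zero_iff φ
    (IsLocalization.injective R P.primeCompl_le_nonZeroDivisors)).mpr hh
  have hspan : Ideal.span {φ h} = (Ideal.span {h}).map φ := by
    rw [Ideal.map_span, Set.image_singleton]
  have hmR : maximalIdeal R ≤ (Ideal.span {φ h}).colon {φ g} := by
    rw [← Localization.AtPrime.map_eq_maximalIdeal, Ideal.map_le_iff_le_comap, hspan]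
    intro z hz
    rw [Ideal.mem_comap, Submodule.mem_colon_singleton, smul_eq_mul, ← map_mul]
    exact Ideal.mem_map_of_mem φ (Submodule.mem_colon_singleton.mp hz)
  have hgR : φ g ∉ Ideal.span {φ h} := by
    rw [hspan, IsLocalization.algebraMap_mem_map_algebraMap_iff P.primeCompl]
    rintro ⟨s, hs, hsg⟩
    exact hs (Submodule.mem_colon_singleton.mpr hsg)
  have := maximalIdeal_isPrincipal_of_le_colon hφh hgR hmR
  refine le_antisymm ?_ ?_
  · calc P.height = ((maximalIdeal R).under A).height := by
          rw [IsLocalization.AtPrime.under_maximalIdeal R P]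
      _ = (maximalIdeal R).height := IsLocalization.height_under P.primeCompl _
      _ ≤ 1 := Ideal.height_le_one_of_isPrincipal_of_mem_minimalPrimes _ _
          (by rw [Ideal.minimalPrimes_eq_subsingleton_self (I := maximalIdeal R)]; rfl)
  · calc 1 ≤ (Ideal.span {h}).height :=
          Ideal.one_le_height_span_singleton_of_mem_nonZeroDivisors
            (mem_nonZeroDivisors_of_ne_zero hh)
      _ ≤ P.height := Ideal.height_mono ((Ideal.span_singleton_le_iff_mem _).mpr hhP)

theorem Ideal.exists_isPrime_colon_singleton_ge {A : Type*} [CommRing A] [IsNoetherianRing A]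
    {I : Ideal A} {g : A} (hg : g ∉ I) :
    ∃ g', (I.colon {g'}).IsPrime ∧ I.colon {g} ≤ I.colon {g'} := by
  have hann (a : A) :
      (⊥ : Submodule A (A ⧸ I)).colon {Ideal.Quotient.mk I a} = I.colon {a} := by
    ext r
    simp only [Submodule.mem_colon_singleton, Submodule.mem_bot, Algebra.smul_def,
      Ideal.Quotient.algebraMap_eq, ← map_mul, Ideal.Quotient.eq_zero_iff_mem,
      Algebra.algebraMap_self, RingHom.id_apply]
  obtain ⟨P, hP, hle⟩ := exists_le_isAssociatedPrime_of_isNoetherianRing A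
    (Ideal.Quotient.mk I g) (by rwa [ne_eq, Ideal.Quotient.eq_zero_iff_mem])
  obtain ⟨hPprime, y, rfl⟩ := isAssociatedPrime_iff.mp hP
  obtain ⟨g', rfl⟩ := Ideal.Quotient.mk_surjective y
  simp only [hann] at hPprime hle
  exact ⟨g', hPprime, hle⟩

section FractionField

variable {A : Type*} [CommRing A] [IsDomain A] (K : Type*) [Field K] [Algebra A K]
  [IsFractionRing A K] (p : PrimeSpectrum A)

@[simp]
theorem atPrimeToFractionField_algebraMap (a : A) :
    atPrimeToFractionField K p (algebraMap A (Localization.AtPrime p.asIdeal) a) =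
      algebraMap A K a :=
  IsLocalization.map_eq _ _

theorem atPrimeToFractionField_injective : Function.Injective (atPrimeToFractionField K p) :=
  IsLocalization.map_injective_of_injective' _ A K (primeCompl_le_nonZeroDivisors p)
    zero_notMem_nonZeroDivisors Function.injective_id

end FractionField

theorem IsIntegrallyClosed.mem_range_algebraMap_of_forall_height_eq_one {A : Type*} [CommRing A]
    [IsDomain A] [IsNoetherianRing A] [IsIntegrallyClosed A] {K : Type*} [Field K] [Algebra A K]
    [IsFractionRing A K] {y : K}
    (H : ∀ p : PrimeSpectrum A, Order.height p = 1 → y ∈ (atPrimeToFractionField K p).range) :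
    y ∈ (algebraMap A K).range := by
  obtain ⟨g, ⟨h, hh⟩, rfl⟩ := IsLocalization.exists_mk'_eq (nonZeroDivisors A) y
  by_contra hy
  have hg : g ∉ Ideal.span {h} := by
    intro hg
    obtain ⟨c, rfl⟩ := Ideal.mem_span_singleton'.mp hg
    exact hy ⟨c, IsLocalization.eq_mk'_iff_mul_eq.mpr (map_mul _ _ _).symm⟩
  obtain ⟨g', hprime, hle⟩ := Ideal.exists_isPrime_colon_singleton_ge hg
  obtain ⟨b, hb⟩ := H ⟨_, hprime⟩ (by
    rw [← PrimeSpectrum.height_eq_orderHeight]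
    exact Ideal.height_eq_one_of_isPrime_colon (nonZeroDivisors.ne_zero hh))
  obtain ⟨c, s, rfl⟩ := IsLocalization.exists_mk'_eq ((Ideal.span {h}).colon {g'}).primeCompl b
  rw [atPrimeToFractionField, IsLocalization.map_mk', IsLocalization.mk'_eq_iff_eq] at hb
  have hsg : c * h = s * g := by simpa [mul_comm] using IsFractionRing.injective A K hb
  exact s.2 (hle (Submodule.mem_colon_singleton.mpr (Ideal.mem_span_singleton'.mpr ⟨c, hsg⟩)))

theorem Ideal.mem_radical_span_singleton_of_forall_height_eq_one {A : Type*} [CommRing A]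
    [IsNoetherianRing A] {f a : A} (hf : f ∈ nonZeroDivisors A)
    (H : ∀ p : PrimeSpectrum A, Order.height p = 1 →
      algebraMap A (Localization.AtPrime p.asIdeal) a ∈
        (Ideal.span {algebraMap A (Localization.AtPrime p.asIdeal) f}).radical) :
    a ∈ (Ideal.span {f}).radical := by
  rw [← Ideal.sInf_minimalPrimes]
  refine Submodule.mem_sInf.mpr fun (q : Ideal A) hq => ?_
  have hqprime := hq.1.1
  have hq1 : q.height = 1 := le_antisymm
    (Ideal.height_le_one_of_isPrincipal_of_mem_minimalPrimes _ q hq)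
    ((Ideal.one_le_height_span_singleton_of_mem_nonZeroDivisors hf).trans
      (Ideal.height_mono hq.1.2))
  obtain ⟨n, hn⟩ := H ⟨q, hqprime⟩ (by rwa [← PrimeSpectrum.height_eq_orderHeight])
  rw [← map_pow, ← Set.image_singleton, ← Ideal.map_span,
    IsLocalization.algebraMap_mem_map_algebraMap_iff q.primeCompl] at hn
  obtain ⟨s, hs, hsa⟩ := hn
  exact hqprime.mem_of_pow_mem n ((hqprime.mem_or_mem (hq.1.2 hsa)).resolve_left hs)

/-- for a Noetherian integrally closed domain `A` and `0 ≠ f ∈ A`,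
inside the fraction field `K = Frac(A)` one has
`MO(A,f) = ⋂_{ht p = 1} MO(A_p, f)`, the intersection over height-one primes. -/
theorem stmt5 {A : Type*} [CommRing A] [IsDomain A] [IsNoetherianRing A]
    [IsIntegrallyClosed A] (f : A) (hf : f ≠ 0)
    (K : Type*) [Field K] [Algebra A K] [IsFractionRing A K] :
    MOset (algebraMap A K) f =
      ⋂ (p : PrimeSpectrum A) (_ : Order.height p = 1),
        MOset (atPrimeToFractionField K p)
          (algebraMap A (Localization.AtPrime p.asIdeal) f) := by
  ext x
  simp only [MOset, Set.mem_iInter, Set.mem_ofPred_eq, atPrimeToFractionField_algebraMap]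
  constructor
  · rintro ⟨a, ha, hax⟩ p -
    refine ⟨algebraMap A _ a, ?_, by simpa⟩
    rw [← Set.image_singleton, ← Ideal.map_span]
    exact Ideal.map_radical_le _ (Ideal.mem_map_of_mem _ ha)
  · intro H
    obtain ⟨a, ha⟩ : algebraMap A K f * x ∈ (algebraMap A K).range :=
      IsIntegrallyClosed.mem_range_algebraMap_of_forall_height_eq_one fun p hp => by
        obtain ⟨b, -, hb⟩ := H p hp
        exact ⟨b, hb⟩
    refine ⟨a, Ideal.mem_radical_span_singleton_of_forall_height_eq_one
      (mem_nonZeroDivisors_of_ne_zero hf) fun p hp => ?_, ha⟩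
    obtain ⟨b, hbrad, hb⟩ := H p hp
    have hba : b = algebraMap A _ a :=
      atPrimeToFractionField_injective K p (by rw [hb, atPrimeToFractionField_algebraMap, ha])
    exact hba ▸ hbrad
end

section
/- Let A be a reduced commutative ring and f ∈ A a nonzerodivisor. Then the canonical localization map A[t][f⁻¹] → A[t][(ft)⁻¹] (which is injective, since t is a nonzerodivisor in A[t][f⁻¹]) maps MO(A[t], f) bijectively onto MO(A[t], ft); i.e., the functorial inclusion MO(A[t], f) ⊆ MO(A[t], ft) is an equality. -/
open Polynomial nonZeroDivisors

section

variable {R : Type*} [CommRing R]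

theorem Ideal.mem_of_pow_mul_mem {I : Ideal R} {h : R} (hI : ∀ c, h * c ∈ I → c ∈ I) :
    ∀ (n : ℕ) (c : R), h ^ n * c ∈ I → c ∈ I
  | 0, c, hc => by simpa using hc
  | n + 1, c, hc => Ideal.mem_of_pow_mul_mem hI n c (hI _ (by rwa [pow_succ', mul_assoc] at hc))

theorem Ideal.mem_radical_of_mul_mem_radical {I : Ideal R} {h c : R}
    (hI : ∀ c, h * c ∈ I → c ∈ I) (hc : h * c ∈ I.radical) : c ∈ I.radical := by
  obtain ⟨n, hn⟩ := hc
  exact ⟨n, I.mem_of_pow_mul_mem hI n _ (by rwa [← mul_pow])⟩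

theorem Ideal.radical_span_singleton_mul (g h : R) :
    (Ideal.span {g * h}).radical = (Ideal.span {g}).radical ⊓ (Ideal.span {h}).radical := by
  rw [← Ideal.span_singleton_mul_span_singleton, Ideal.radical_mul]

variable {S T : Type*} [CommRing S] [CommRing T] [Algebra R S] [Algebra R T] {g h : R}
  (ψ : S →+* T) (hψ : ∀ r, ψ (algebraMap R S r) = algebraMap R T r)
include hψ

theorem injective_of_comp_algebraMap_eq_away_mul [IsLocalization.Away g S]
    [IsLocalization.Away (g * h) T] (hh : h ∈ R⁰) : Function.Injective ψ := by
  rw [injective_iff_map_eq_zero]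
  intro x hx
  obtain ⟨⟨r, s⟩, rfl⟩ := IsLocalization.mk'_surjective (Submonoid.powers g) x
  have hr : algebraMap R T r = 0 := by
    rw [← hψ, ← IsLocalization.mk'_spec S r s, map_mul, hx, zero_mul]
  obtain ⟨⟨_, k, rfl⟩, hk⟩ := (IsLocalization.map_eq_zero_iff (Submonoid.powers (g * h)) T r).1 hr
  refine (IsLocalization.mk'_eq_zero_iff r s).2 ⟨⟨g ^ k, k, rfl⟩, ?_⟩
  refine (mem_nonZeroDivisors_iff_right.1 (pow_mem hh k)) _ ?_
  simpa [mul_pow, mul_right_comm] using hk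

theorem image_MOset_subset_MOset_mul :
    ψ '' MOset (algebraMap R S) g ⊆ MOset (algebraMap R T) (g * h) := by
  rintro _ ⟨x, ⟨a, ha, hax⟩, rfl⟩
  refine ⟨h * a, ?_, ?_⟩
  · rw [Ideal.radical_span_singleton_mul]
    exact ⟨Ideal.mul_mem_left _ h ha,
      Ideal.le_radical (Ideal.mul_mem_right _ _ (Ideal.mem_span_singleton_self h))⟩
  · have hax' := congrArg ψ hax
    rw [map_mul, hψ, hψ] at hax'
    rw [map_mul, map_mul, hax']
    ring

theorem MOset_mul_subset_image_MOset [IsLocalization.Away g S] [IsLocalization.Away (g * h) T]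
    (hreg : ∀ c, h * c ∈ Ideal.span {g} → c ∈ Ideal.span {g}) (hh : IsRadical h) :
    MOset (algebraMap R T) (g * h) ⊆ ψ '' MOset (algebraMap R S) g := by
  rintro y ⟨b, hb, hby⟩
  rw [Ideal.radical_span_singleton_mul] at hb
  obtain ⟨c, rfl⟩ : h ∣ b := by
    obtain ⟨n, hn⟩ := hb.2
    exact hh n b (Ideal.mem_span_singleton.1 hn)
  set x := IsLocalization.mk' S c (⟨g, Submonoid.mem_powers g⟩ : Submonoid.powers g)
  have hx : algebraMap R S g * x = algebraMap R S c := IsLocalization.mk'_spec' S c ⟨g, _⟩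
  refine ⟨x, ⟨c, Ideal.mem_radical_of_mul_mem_radical hreg hb.1, hx.symm⟩, ?_⟩
  have hψx := congrArg ψ hx
  rw [map_mul, hψ, hψ] at hψx
  rw [map_mul, map_mul] at hby
  have hgh := IsLocalization.Away.algebraMap_isUnit (S := T) (g * h)
  rw [map_mul] at hgh
  refine (isUnit_of_mul_isUnit_left hgh).mul_left_cancel
    ((isUnit_of_mul_isUnit_right hgh).mul_left_cancel ?_)
  linear_combination algebraMap R T h * hψx + hby

end

namespace Polynomial

variable {A : Type*} [CommRing A]

theorem isRadical_X [IsReduced A] : IsRadical (X : A[X]) := by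
  intro n p hp
  rw [X_dvd_iff, coeff_zero_eq_eval_zero] at hp ⊢
  rw [eval_pow] at hp
  exact IsReduced.eq_zero _ ⟨n, hp⟩

theorem mem_span_C_of_X_mul_mem {f : A} {p : A[X]} (hp : X * p ∈ Ideal.span {C f}) :
    p ∈ Ideal.span {C f} := by
  rw [← Set.image_singleton, ← Ideal.map_span, Ideal.mem_map_C_iff] at hp ⊢
  intro n
  simpa using hp (n + 1)

end Polynomial

theorem stmt8_general {A : Type*} [CommRing A] [IsReduced A] (f : A)
    (ψ : Localization.Away (Polynomial.C f : Polynomial A) →+*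
      Localization.Away (Polynomial.C f * Polynomial.X : Polynomial A))
    (hψ : ψ.comp (algebraMap (Polynomial A) (Localization.Away (Polynomial.C f))) =
      algebraMap (Polynomial A) (Localization.Away (Polynomial.C f * Polynomial.X))) :
    Function.Injective ψ ∧
      ψ '' MOset (algebraMap (Polynomial A) (Localization.Away (Polynomial.C f)))
          (Polynomial.C f) =
        MOset (algebraMap (Polynomial A)
            (Localization.Away (Polynomial.C f * Polynomial.X)))
          (Polynomial.C f * Polynomial.X) := by
  have hψ' := RingHom.congr_fun hψ
  exact ⟨injective_of_comp_algebraMap_eq_away_mul (g := C f) ψ hψ' X_mem_nonzeroDivisors,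
    (image_MOset_subset_MOset_mul ψ hψ').antisymm
      (MOset_mul_subset_image_MOset ψ hψ' (fun _ => mem_span_C_of_X_mul_mem) isRadical_X)⟩

/-- for `A` reduced and `f ∈ A` a nonzerodivisor, the canonical map
`A[t][f⁻¹] → A[t][(f·t)⁻¹]` (the unique `ψ` compatible with the localization maps from
`A[t]`) is injective and maps `MO(A[t], f)` bijectively onto `MO(A[t], f·t)`. -/
theorem stmt8 {A : Type*} [CommRing A] [IsReduced A] (f : A) (hf : f ∈ nonZeroDivisors A)
    (ψ : Localization.Away (Polynomial.C f : Polynomial A) →+*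
      Localization.Away (Polynomial.C f * Polynomial.X : Polynomial A))
    (hψ : ψ.comp (algebraMap (Polynomial A) (Localization.Away (Polynomial.C f))) =
      algebraMap (Polynomial A) (Localization.Away (Polynomial.C f * Polynomial.X))) :
    Function.Injective ψ ∧
      ψ '' MOset (algebraMap (Polynomial A) (Localization.Away (Polynomial.C f)))
          (Polynomial.C f) =
        MOset (algebraMap (Polynomial A)
            (Localization.Away (Polynomial.C f * Polynomial.X)))
          (Polynomial.C f * Polynomial.X) :=
  stmt8_general f ψ hψ
end

section
/- Let A be a reduced commutative ring and f ∈ A a nonzerodivisor. Then the sequence of A-modules 0 → MO(A, f) → MO(A[t], f) ⊕ MO(A[u], f·u) → MO(A[t, t⁻¹], f) → 0 is exact. Here A[t] and A[u] are polynomial rings in one variable, A[t,t⁻¹] is the Laurent polynomial ring; the first map is x ↦ (x, x) induced by the inclusions A → A[t] and A → A[u]; the second map is (p, q) ↦ p − q*, where p ∈ MO(A[t],f) maps to MO(A[t,t⁻¹], f) via the inclusion A[t] → A[t,t⁻¹], and q ∈ MO(A[u], f·u) maps to q* ∈ MO(A[t,t⁻¹], f) via the ring map A[u] → A[t,t⁻¹]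 sending u to t⁻¹ (this map carries f·u to f·t⁻¹, which divides f, so it induces a map on MO by functoriality). -/
/-- The Laurent polynomial ring `A[t,t⁻¹]`, modeled as the localization of `A[t]`
away from `t`. -/
abbrev Laurent (A : Type*) [CommRing A] : Type _ :=
  Localization.Away (Polynomial.X : Polynomial A)

/-- The ring map `A[u] → A[t,t⁻¹]` sending `u ↦ t⁻¹` (and `a ↦ a` for `a ∈ A`). -/
noncomputable def uToTinv (A : Type*) [CommRing A] : Polynomial A →+* Laurent A :=
  Polynomial.eval₂RingHom
    ((algebraMap (Polynomial A) (Laurent A)).comp (Polynomial.C : A →+* Polynomial A))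
    (IsLocalization.Away.invSelf (S := Laurent A) (Polynomial.X : Polynomial A))

/-!
Write `t` for the Laurent variable, so that `u ↦ t⁻¹`. Since `√(f A[t]) = (√(f A))[t]`, a
witness in `√(f A[t,t⁻¹])` splits as `P(t) + Q(t⁻¹)` with `P, Q` having coefficients in
`√(f A)`, which gives surjectivity. In the middle, reducedness of `A` makes the witness of
`q ∈ MO(A[u], f u)` divisible by `u`, say `u Q`; then `γ p = δ q` reads `P(t) = Q(t⁻¹)`
after cancelling the nonzerodivisor `f`, and a polynomial in `t` equal to a polynomial in
`t⁻¹` is a constant `a ∈ √(f A)`, so `(p, q)` comes from `a / f ∈ MO(A, f)`. On the left,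
`A_f → A[t]_f` is already injective because `f` is a nonzerodivisor.
-/

open Polynomial

theorem Ideal.map_mem_radical_span_singleton {R S : Type*} [CommRing R] [CommRing S]
    (φ : R →+* S) {g a : R} (ha : a ∈ (Ideal.span {g}).radical) :
    φ a ∈ (Ideal.span {φ g}).radical := by
  simpa [Ideal.map_span] using Ideal.map_radical_le φ (Ideal.mem_map_of_mem φ ha)

theorem Ideal.mul_mem_radical_span_singleton_mul {R : Type*} [CommRing R] {g a : R}
    (ha : a ∈ (Ideal.span {g}).radical) (c : R) : a * c ∈ (Ideal.span {g * c}).radical := by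
  rw [← Ideal.span_singleton_mul_span_singleton, Ideal.radical_mul]
  exact ⟨Ideal.mul_mem_right _ _ ha,
    Ideal.le_radical (Ideal.mem_span_singleton.mpr (dvd_mul_left c a))⟩

instance Polynomial.instIsReduced {R : Type*} [CommRing R] [IsReduced R] : IsReduced R[X] :=
  ⟨fun _ hp => ext fun i => (Polynomial.isNilpotent_iff.mp hp i).eq_zero⟩

theorem Polynomial.radical_map_C {R : Type*} [CommRing R] (I : Ideal R) :
    (I.map (C : R →+* R[X])).radical = I.radical.map C := by
  refine le_antisymm ?_ (Ideal.map_radical_le C)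
  have : IsReduced (R ⧸ I.radical) :=
    (Ideal.isRadical_iff_quotient_reduced _).mp I.radical_isRadical
  have hker : RingHom.ker (mapRingHom (Ideal.Quotient.mk I.radical)) = I.radical.map C := by
    rw [ker_mapRingHom, Ideal.mk_ker]
  have hrad : (RingHom.ker (mapRingHom (Ideal.Quotient.mk I.radical))).IsRadical :=
    (RingHom.ker_isRadical_iff_reduced_of_surjective
      (map_surjective _ Ideal.Quotient.mk_surjective)).mpr inferInstance
  rw [← hker]
  exact (Ideal.radical_mono (hker ▸ Ideal.map_mono I.le_radical)).trans hrad

theorem Polynomial.X_dvd_of_mem_radical_span_mul_X {R : Type*} [CommRing R] [IsReduced R]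
    {g Q : R[X]} (hQ : Q ∈ (Ideal.span {g * X}).radical) : X ∣ Q := by
  obtain ⟨n, hn⟩ := hQ
  obtain ⟨w, hw⟩ := Ideal.mem_span_singleton'.mp hn
  rw [X_dvd_iff, coeff_zero_eq_eval_zero]
  refine IsReduced.eq_zero _ ⟨n, ?_⟩
  simpa using (congrArg (eval 0) hw).symm

theorem Polynomial.C_mem_nonZeroDivisors {R : Type*} [CommRing R] {a : R}
    (ha : a ∈ nonZeroDivisors R) : C a ∈ nonZeroDivisors R[X] :=
  mem_nonZeroDivisors_of_leadingCoeff (by rwa [leadingCoeff_C])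

theorem IsLocalization.injective_of_injective_comp {R S T : Type*} [CommRing R] [CommRing S]
    [CommRing T] [Algebra R S] (M : Submonoid R) [IsLocalization M S] (φ : S →+* T)
    (h : Function.Injective (φ.comp (algebraMap R S))) : Function.Injective φ :=
  (IsLocalization.injective_iff_map_algebraMap_eq M φ).mpr fun _ _ =>
    ⟨congrArg φ, fun hxy => congrArg _ (h hxy)⟩

namespace MOset

variable {R S L L' : Type*} [CommRing R] [CommRing S] [CommRing L] [CommRing L']

theorem mul_map_eq {ιR : R →+* L} {ιS : S →+* L'} {φ : R →+* S} {Φ : L →+* L'}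
    (hΦ : Φ.comp ιR = ιS.comp φ) {g a : R} {x : L} (hx : ιR a = ιR g * x) (c : S) :
    ιS (φ g * c) * Φ x = ιS (φ a * c) := by
  have e (r : R) : Φ (ιR r) = ιS (φ r) := RingHom.congr_fun hΦ r
  rw [map_mul, map_mul, ← e, ← e, hx, map_mul]
  ring

theorem mapsTo {ιR : R →+* L} {ιS : S →+* L'} (φ : R →+* S) (Φ : L →+* L')
    (hΦ : Φ.comp ιR = ιS.comp φ) {g : R} {h c : S} (hc : φ g * c = h) :
    Set.MapsTo Φ (MOset ιR g) (MOset ιS h) := by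
  rintro x ⟨a, ha, hx⟩
  subst hc
  exact ⟨φ a * c, Ideal.mul_mem_radical_span_singleton_mul
    (Ideal.map_mem_radical_span_singleton φ ha) c, (mul_map_eq hΦ hx c).symm⟩

end MOset

section Laurent

variable {A : Type*} [CommRing A]

local notation "ι" => algebraMap A[X] (Laurent A)

theorem uToTinv_C (a : A) : uToTinv A (C a) = ι (C a) := by
  simp [uToTinv]

theorem uToTinv_X : uToTinv A X = IsLocalization.Away.invSelf (S := Laurent A) (X : A[X]) := by
  simp [uToTinv]

theorem uToTinv_X_mul_algebraMap_X : uToTinv A X * ι X = 1 := by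
  rw [uToTinv_X, mul_comm, IsLocalization.Away.mul_invSelf]

theorem algebraMap_injective_laurent : Function.Injective ι :=
  IsLocalization.injective _ (Submonoid.powers_le.mpr monic_X.mem_nonZeroDivisors)

theorem uToTinv_mul_X_mul_algebraMap_X (Q : A[X]) : uToTinv A (Q * X) * ι X = uToTinv A Q := by
  rw [map_mul, mul_assoc, uToTinv_X_mul_algebraMap_X, mul_one]

theorem algebraMap_mem_nonZeroDivisors_laurent {P : A[X]} (hP : P ∈ nonZeroDivisors A[X]) :
    ι P ∈ nonZeroDivisors (Laurent A) :=
  IsLocalization.map_nonZeroDivisors_le (Submonoid.powers X) _ ⟨P, hP, rfl⟩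

theorem uToTinv_mul_algebraMap_X_pow {Q : A[X]} {m : ℕ} (hQ : Q.natDegree ≤ m) :
    uToTinv A Q * ι X ^ m = ι (Q.reflect m) := by
  let : Invertible (ι X) := ⟨IsLocalization.Away.invSelf X,
    by rw [mul_comm, IsLocalization.Away.mul_invSelf], IsLocalization.Away.mul_invSelf X⟩
  have h := eval₂_reflect_mul_pow ((ι).comp C) (ι X) m (Q.reflect m)
    (natDegree_reflect_le.trans (max_le le_rfl hQ))
  rw [reflect_reflect, ← hom_eval₂, eval₂_C_X] at h
  rw [← h, uToTinv, coe_eval₂RingHom]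
  rfl

theorem eq_C_of_algebraMap_eq_uToTinv {P Q : A[X]} (h : ι P = uToTinv A Q) :
    P = C (P.coeff 0) ∧ Q = C (P.coeff 0) := by
  set d := Q.natDegree
  have hPQ : P * X ^ d = Q.reflect d := by
    apply algebraMap_injective_laurent
    rw [← uToTinv_mul_algebraMap_X_pow le_rfl, map_mul, map_pow, h]
  have hdeg : (Q.reflect d).natDegree ≤ d := natDegree_reflect_le.trans (max_self d).le
  set a := P.coeff 0
  have hP : P = C a := by
    refine eq_C_of_natDegree_le_zero (natDegree_le_iff_coeff_eq_zero.mpr fun i hi => ?_)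
    rw [← coeff_mul_X_pow P d i, hPQ]
    exact coeff_eq_zero_of_natDegree_lt (by omega)
  refine ⟨hP, ?_⟩
  rw [hP] at hPQ
  rw [← reflect_reflect (N := d) (p := Q), ← hPQ, reflect_C_mul_X_pow, revAt_le le_rfl,
    Nat.sub_self, pow_zero, mul_one]

theorem exists_algebraMap_eq_add_uToTinv_mul_pow {I : Ideal A} (m : ℕ) {R : A[X]}
    (hR : R ∈ I.map C) : ∃ P ∈ I.map C, ∃ Q ∈ I.map C,
      ι R = (ι P + uToTinv A Q) * ι X ^ m := by
  induction m generalizing R with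
  | zero => exact ⟨R, hR, 0, zero_mem _, by simp⟩
  | succ m ih =>
    have hR' : R.divX ∈ I.map C :=
      Ideal.mem_map_C_iff.mpr fun n => by rw [coeff_divX]; exact Ideal.mem_map_C_iff.mp hR _
    obtain ⟨P, hP, Q, hQ, hPQ⟩ := ih hR'
    have hr : C (R.coeff 0) ∈ I.map C := Ideal.mem_map_of_mem _ (Ideal.mem_map_C_iff.mp hR 0)
    refine ⟨P, hP, Q + C (R.coeff 0) * X ^ (m + 1),
      add_mem hQ (Ideal.mul_mem_right _ _ hr), ?_⟩
    have hunit : (uToTinv A X * ι X) ^ (m + 1) = 1 := by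
      rw [uToTinv_X_mul_algebraMap_X, one_pow]
    -- `R = t * R.divX + R₀`, and `R₀ = (R₀ u ^ (m + 1))(t⁻¹) * t ^ (m + 1)`
    conv_lhs => rw [← X_mul_divX_add R]
    rw [map_add, map_mul, hPQ, map_add, map_mul, map_pow, uToTinv_C]
    linear_combination (-ι (C (R.coeff 0))) * hunit

theorem exists_eq_algebraMap_add_uToTinv {I : Ideal A} {L : Laurent A}
    (hL : L ∈ (I.map C).map ι) :
    ∃ P ∈ I.map C, ∃ Q ∈ I.map C, L = ι P + uToTinv A Q := by
  obtain ⟨⟨⟨R, hR⟩, ⟨_, m, rfl⟩⟩, hLR⟩ :=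
    (IsLocalization.mem_map_algebraMap_iff (Submonoid.powers X) _).mp hL
  obtain ⟨P, hP, Q, hQ, hPQ⟩ := exists_algebraMap_eq_add_uToTinv_mul_pow m hR
  refine ⟨P, hP, Q, hQ, ?_⟩
  refine ((IsLocalization.Away.algebraMap_isUnit (X : A[X])).pow m).mul_right_cancel ?_
  simp only at hLR
  rw [← hPQ, ← hLR, map_pow]

end Laurent

section Exactness

variable {A : Type*} [CommRing A] {f : A}
  {Lf Lt Lu Lm : Type*} [CommRing Lf] [CommRing Lt] [CommRing Lu] [CommRing Lm]
  [Algebra A Lf] [Algebra A[X] Lt] [Algebra A[X] Lu] [Algebra (Laurent A) Lm]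
  [IsLocalization.Away f Lf] [IsLocalization.Away (C f) Lt] [IsLocalization.Away (C f * X) Lu]
  [IsLocalization.Away (algebraMap A[X] (Laurent A) (C f)) Lm]
  {α : Lf →+* Lt} {β : Lf →+* Lu} {γ : Lt →+* Lm} {δ : Lu →+* Lm}

local notation "ι" => algebraMap A[X] (Laurent A)

theorem alpha_injective (hf : f ∈ nonZeroDivisors A)
    (hα : α.comp (algebraMap A Lf) = (algebraMap A[X] Lt).comp C) : Function.Injective α := by
  refine IsLocalization.injective_of_injective_comp (Submonoid.powers f) α ?_
  rw [hα]
  exact (IsLocalization.injective _ (Submonoid.powers_le.mpr (C_mem_nonZeroDivisors hf))).comp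
    C_injective

theorem gamma_comp_alpha_eq_delta_comp_beta (M : Submonoid A) [IsLocalization M Lf]
    (hα : α.comp (algebraMap A Lf) = (algebraMap A[X] Lt).comp C)
    (hβ : β.comp (algebraMap A Lf) = (algebraMap A[X] Lu).comp C)
    (hγ : γ.comp (algebraMap A[X] Lt) = (algebraMap (Laurent A) Lm).comp ι)
    (hδ : δ.comp (algebraMap A[X] Lu) = (algebraMap (Laurent A) Lm).comp (uToTinv A)) :
    γ.comp α = δ.comp β := by
  refine IsLocalization.ringHom_ext M ?_
  rw [RingHom.comp_assoc, hα, RingHom.comp_assoc, hβ, ← RingHom.comp_assoc, hγ,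
    ← RingHom.comp_assoc, hδ, RingHom.comp_assoc, RingHom.comp_assoc,
    show (uToTinv A).comp C = (ι).comp C from RingHom.ext uToTinv_C]

theorem exists_mem_MOset_of_map_eq [IsReduced A] (hf : f ∈ nonZeroDivisors A)
    (hα : α.comp (algebraMap A Lf) = (algebraMap A[X] Lt).comp C)
    (hβ : β.comp (algebraMap A Lf) = (algebraMap A[X] Lu).comp C)
    (hγ : γ.comp (algebraMap A[X] Lt) = (algebraMap (Laurent A) Lm).comp ι)
    (hδ : δ.comp (algebraMap A[X] Lu) = (algebraMap (Laurent A) Lm).comp (uToTinv A))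
    {p : Lt} (hp : p ∈ MOset (algebraMap A[X] Lt) (C f))
    {q : Lu} (hq : q ∈ MOset (algebraMap A[X] Lu) (C f * X)) (hpq : γ p = δ q) :
    ∃ x ∈ MOset (algebraMap A Lf) f, α x = p ∧ β x = q := by
  obtain ⟨P, hP, eP⟩ := hp
  obtain ⟨Q, hQ, eQ⟩ := hq
  obtain ⟨Q, rfl⟩ := X_dvd_of_mem_radical_span_mul_X hQ
  have hPQ : ι P = uToTinv A Q := by
    refine IsLocalization.injective Lm (Submonoid.powers_le.mpr
      (algebraMap_mem_nonZeroDivisors_laurent (C_mem_nonZeroDivisors hf))) ?_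
    have hγp := MOset.mul_map_eq hγ eP 1
    have hδq := MOset.mul_map_eq hδ eQ (ι X)
    rw [mul_one, mul_one] at hγp
    rw [uToTinv_mul_X_mul_algebraMap_X, uToTinv_C, mul_comm X Q,
      uToTinv_mul_X_mul_algebraMap_X, ← hpq] at hδq
    exact hγp.symm.trans hδq
  obtain ⟨hPC, hQC⟩ := eq_C_of_algebraMap_eq_uToTinv hPQ
  set a := P.coeff 0
  have ha : a ∈ (Ideal.span {f}).radical := by
    simpa only [constantCoeff_apply, coeff_C_zero] using
      Ideal.map_mem_radical_span_singleton constantCoeff hP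
  obtain ⟨x, hx⟩ := (IsLocalization.Away.algebraMap_isUnit (S := Lf) f).dvd
    (a := algebraMap A Lf a)
  refine ⟨x, ⟨a, ha, hx⟩, ?_, ?_⟩
  · refine (IsLocalization.Away.algebraMap_isUnit (C f)).mul_left_cancel ?_
    have hαx := MOset.mul_map_eq hα hx 1
    rw [mul_one, mul_one] at hαx
    rw [hαx, ← hPC, eP]
  · refine (IsLocalization.Away.algebraMap_isUnit (C f * X)).mul_left_cancel ?_
    rw [MOset.mul_map_eq hβ hx X, ← eQ, hQC, mul_comm]

theorem exists_sub_eq_of_mem_MOset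
    (hγ : γ.comp (algebraMap A[X] Lt) = (algebraMap (Laurent A) Lm).comp ι)
    (hδ : δ.comp (algebraMap A[X] Lu) = (algebraMap (Laurent A) Lm).comp (uToTinv A))
    {z : Lm} (hz : z ∈ MOset (algebraMap (Laurent A) Lm) (ι (C f))) :
    ∃ p ∈ MOset (algebraMap A[X] Lt) (C f), ∃ q ∈ MOset (algebraMap A[X] Lu) (C f * X),
      γ p - δ q = z := by
  obtain ⟨L, hL, eL⟩ := hz
  have hL' : L ∈ ((Ideal.span {f}).radical.map C).map ι := by
    rwa [← radical_map_C, IsLocalization.map_radical (Submonoid.powers X), Ideal.map_span,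
      Set.image_singleton, Ideal.map_span, Set.image_singleton]
  obtain ⟨P, hP, Q, hQ, rfl⟩ := exists_eq_algebraMap_add_uToTinv hL'
  rw [← radical_map_C, Ideal.map_span, Set.image_singleton] at hP hQ
  obtain ⟨p, hp⟩ := (IsLocalization.Away.algebraMap_isUnit (S := Lt) (C f)).dvd
    (a := algebraMap A[X] Lt P)
  obtain ⟨q, hq⟩ := (IsLocalization.Away.algebraMap_isUnit (S := Lu) (C f * X)).dvd
    (a := algebraMap A[X] Lu (-(Q * X)))
  refine ⟨p, ⟨P, hP, hp⟩, q,
    ⟨_, neg_mem (Ideal.mul_mem_radical_span_singleton_mul hQ X), hq⟩, ?_⟩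
  refine (IsLocalization.Away.algebraMap_isUnit (ι (C f))).mul_left_cancel ?_
  have hγp := MOset.mul_map_eq hγ hp 1
  have hδq := MOset.mul_map_eq hδ hq (ι X)
  rw [mul_one, mul_one] at hγp
  rw [uToTinv_mul_X_mul_algebraMap_X, uToTinv_C, map_neg, neg_mul,
    uToTinv_mul_X_mul_algebraMap_X, map_neg] at hδq
  rw [map_add] at eL
  linear_combination hγp - hδq + eL

end Exactness

/-- for `A` reduced and `f ∈ A` a nonzerodivisor, the sequence of
`A`-modules `0 → MO(A,f) → MO(A[t],f) ⊕ MO(A[u], f·u) → MO(A[t,t⁻¹], f) → 0` is exact.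
Here `α, β, γ, δ` are the (unique) localized ring maps induced by, respectively, the
inclusions `A → A[t]`, `A → A[u]`, `A[t] → A[t,t⁻¹]` and the map `A[u] → A[t,t⁻¹]`,
`u ↦ t⁻¹`; the first map is `x ↦ (α x, β x)` and the second is `(p,q) ↦ γ p - δ q`. -/
theorem stmt9 {A : Type*} [CommRing A] [IsReduced A] (f : A)
    (hf : f ∈ nonZeroDivisors A)
    (α : Localization.Away f →+* Localization.Away (Polynomial.C f : Polynomial A))
    (hα : α.comp (algebraMap A (Localization.Away f)) =
      (algebraMap (Polynomial A) (Localization.Away (Polynomial.C f))).comp Polynomial.C)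
    (β : Localization.Away f →+*
      Localization.Away (Polynomial.C f * Polynomial.X : Polynomial A))
    (hβ : β.comp (algebraMap A (Localization.Away f)) =
      (algebraMap (Polynomial A)
        (Localization.Away (Polynomial.C f * Polynomial.X))).comp Polynomial.C)
    (γ : Localization.Away (Polynomial.C f : Polynomial A) →+*
      Localization.Away (algebraMap (Polynomial A) (Laurent A) (Polynomial.C f)))
    (hγ : γ.comp (algebraMap (Polynomial A) (Localization.Away (Polynomial.C f))) =
      (algebraMap (Laurent A)
        (Localization.Away (algebraMap (Polynomial A) (Laurent A) (Polynomial.C f)))).comp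
          (algebraMap (Polynomial A) (Laurent A)))
    (δ : Localization.Away (Polynomial.C f * Polynomial.X : Polynomial A) →+*
      Localization.Away (algebraMap (Polynomial A) (Laurent A) (Polynomial.C f)))
    (hδ : δ.comp (algebraMap (Polynomial A)
        (Localization.Away (Polynomial.C f * Polynomial.X))) =
      (algebraMap (Laurent A)
        (Localization.Away (algebraMap (Polynomial A) (Laurent A) (Polynomial.C f)))).comp
          (uToTinv A)) :
    -- the sequence is well defined:
    Set.MapsTo α (MOset (algebraMap A (Localization.Away f)) f)
      (MOset (algebraMap (Polynomial A) (Localization.Away (Polynomial.C f)))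
        (Polynomial.C f)) ∧
    Set.MapsTo β (MOset (algebraMap A (Localization.Away f)) f)
      (MOset (algebraMap (Polynomial A)
          (Localization.Away (Polynomial.C f * Polynomial.X)))
        (Polynomial.C f * Polynomial.X)) ∧
    Set.MapsTo γ
      (MOset (algebraMap (Polynomial A) (Localization.Away (Polynomial.C f)))
        (Polynomial.C f))
      (MOset (algebraMap (Laurent A)
          (Localization.Away (algebraMap (Polynomial A) (Laurent A) (Polynomial.C f))))
        (algebraMap (Polynomial A) (Laurent A) (Polynomial.C f))) ∧
    Set.MapsTo δ
      (MOset (algebraMap (Polynomial A)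
          (Localization.Away (Polynomial.C f * Polynomial.X)))
        (Polynomial.C f * Polynomial.X))
      (MOset (algebraMap (Laurent A)
          (Localization.Away (algebraMap (Polynomial A) (Laurent A) (Polynomial.C f))))
        (algebraMap (Polynomial A) (Laurent A) (Polynomial.C f))) ∧
    -- exactness at `MO(A,f)`: the map `x ↦ (α x, β x)` is injective:
    (∀ x ∈ MOset (algebraMap A (Localization.Away f)) f,
      ∀ y ∈ MOset (algebraMap A (Localization.Away f)) f,
        α x = α y → β x = β y → x = y) ∧
    -- exactness in the middle: `(p,q)` is killed by `(p,q) ↦ γ p - δ q` iff it comes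
    -- from some `x ∈ MO(A,f)`:
    (∀ p ∈ MOset (algebraMap (Polynomial A) (Localization.Away (Polynomial.C f)))
        (Polynomial.C f),
      ∀ q ∈ MOset (algebraMap (Polynomial A)
          (Localization.Away (Polynomial.C f * Polynomial.X)))
        (Polynomial.C f * Polynomial.X),
        (γ p = δ q ↔
          ∃ x ∈ MOset (algebraMap A (Localization.Away f)) f, α x = p ∧ β x = q)) ∧
    -- exactness at the right: `(p,q) ↦ γ p - δ q` is surjective onto `MO(A[t,t⁻¹],f)`:
    (∀ z ∈ MOset (algebraMap (Laurent A)
        (Localization.Away (algebraMap (Polynomial A) (Laurent A) (Polynomial.C f))))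
        (algebraMap (Polynomial A) (Laurent A) (Polynomial.C f)),
      ∃ p ∈ MOset (algebraMap (Polynomial A) (Localization.Away (Polynomial.C f)))
          (Polynomial.C f),
        ∃ q ∈ MOset (algebraMap (Polynomial A)
            (Localization.Away (Polynomial.C f * Polynomial.X)))
          (Polynomial.C f * Polynomial.X),
          γ p - δ q = z) := by
  refine ⟨MOset.mapsTo C α hα (mul_one _), MOset.mapsTo C β hβ rfl,
    MOset.mapsTo _ γ hγ (mul_one _), MOset.mapsTo (uToTinv A) δ hδ
      (by rw [uToTinv_mul_X_mul_algebraMap_X, uToTinv_C]),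
    fun x _ y _ hxy _ => alpha_injective hf hα hxy,
    fun p hp q hq => ⟨exists_mem_MOset_of_map_eq hf hα hβ hγ hδ hp hq, ?_⟩,
    fun z hz => exists_sub_eq_of_mem_MOset hγ hδ hz⟩
  rintro ⟨x, -, rfl, rfl⟩
  exact RingHom.congr_fun
    (gamma_comp_alpha_eq_delta_comp_beta (Submonoid.powers f) hα hβ hγ hδ) x
end

section
/- Let A be a unique factorization domain and f ∈ A a nonzero element. Then the radical √(fA) of the principal ideal (f) is principal, say √(fA) = (r), and MO(A, f) is the cyclic A-submodule of A[f⁻¹] generated by r/f; moreover MO(A, f) is a free A-module of rank one (the map A → MO(A,f), a ↦ a·(r/f), is an A-module isomorphism). Explicitly, if f = c·p₁^{m₁}···p_n^{m_n} with c a unit, the p_i pairwise non-associated irreducible elements, and m_i > 0 for all i, then MO(A, f) = (1/(p₁^{m₁−1}···p_n^{m_n−1}))·A inside A[f⁻¹]. -/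
namespace UniqueFactorizationMonoid

variable {A : Type*} [CommRing A] [NormalizationMonoid A] [UniqueFactorizationMonoid A]

theorem radical_span_singleton_eq_span_radical {f : A} (hf : f ≠ 0) :
    (Ideal.span {f}).radical = Ideal.span {radical f} := by
  ext a
  simp only [Ideal.mem_radical_iff, Ideal.mem_span_singleton, exists_dvd_pow_iff_radical_dvd hf]

theorem associated_radical_unit_mul_prod_pow {ι : Type*} [Fintype ι] {c : A} {p : ι → A}
    {m : ι → ℕ} (hc : IsUnit c) (hp : ∀ i, Irreducible (p i))
    (hass : Pairwise fun i j => ¬Associated (p i) (p j)) (hm : ∀ i, m i ≠ 0) :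
    Associated (radical (c * ∏ i, p i ^ m i)) (∏ i, p i) := by
  have hcoprime : Set.Pairwise ((Finset.univ : Finset ι) : Set ι)
      (Function.onFun IsRelPrime fun i => p i ^ m i) :=
    fun i _ j _ hij => ((hp i).isRelPrime_iff_not_dvd.mpr
      fun hdvd => hass hij ((hp i).associated_of_dvd (hp j) hdvd)).pow
  rw [radical_mul_of_isUnit_left hc, radical_prod _ hcoprime]
  exact Associated.prod _ _ _ fun i _ => by
    rw [radical_pow_of_prime (hp i).prime (hm i)]
    exact normalize_associated _

end UniqueFactorizationMonoid

section MOset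

variable {A L : Type*} [CommRing A] [CommRing L] [Algebra A L] {f r : A}

theorem mem_MOset_iff_of_radical_eq_span (hrad : (Ideal.span {f}).radical = Ideal.span {r})
    {x : L} :
    x ∈ MOset (algebraMap A L) f ↔
      ∃ b, algebraMap A L r * algebraMap A L b = algebraMap A L f * x := by
  simp only [MOset, hrad, Ideal.mem_span_singleton, Set.mem_ofPred_eq]
  constructor
  · rintro ⟨_, ⟨b, rfl⟩, h⟩
    exact ⟨b, by rw [← map_mul, h]⟩
  · rintro ⟨b, h⟩
    exact ⟨r * b, dvd_mul_right r b, by rw [map_mul, h]⟩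

variable [IsLocalization.Away f L]

theorem algebraMap_mul_smul_mk' (a : A) :
    algebraMap A L f *
        a • IsLocalization.mk' L r (⟨f, Submonoid.mem_powers f⟩ : Submonoid.powers f) =
      algebraMap A L r * algebraMap A L a := by
  rw [Algebra.smul_def, mul_left_comm, IsLocalization.mk'_spec'_mk, mul_comm]

theorem MOset_eq_range_smul_mk' (hrad : (Ideal.span {f}).radical = Ideal.span {r}) :
    MOset (algebraMap A L) f =
      Set.range fun a : A =>
        a • IsLocalization.mk' L r (⟨f, Submonoid.mem_powers f⟩ : Submonoid.powers f) := by
  ext x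
  rw [mem_MOset_iff_of_radical_eq_span hrad, Set.mem_range]
  refine exists_congr fun b => ?_
  rw [← (IsLocalization.Away.algebraMap_isUnit (S := L) f).mul_right_inj (b := b • _),
    algebraMap_mul_smul_mk', eq_comm]

theorem MOset_eq_of_radical_eq_span_of_eq_mul {q : A}
    (hrad : (Ideal.span {f}).radical = Ideal.span {r}) (hfqr : f = q * r) :
    MOset (algebraMap A L) f = {x | ∃ a, algebraMap A L q * x = algebraMap A L a} := by
  have hr : IsUnit (algebraMap A L r) := by
    apply isUnit_of_mul_isUnit_right (x := algebraMap A L q)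
    rw [← map_mul, ← hfqr]
    exact IsLocalization.Away.algebraMap_isUnit f
  ext x
  rw [mem_MOset_iff_of_radical_eq_span hrad, Set.mem_ofPred_eq]
  refine exists_congr fun b => ?_
  rw [hfqr, map_mul, mul_comm (algebraMap A L q), mul_assoc, hr.mul_right_inj, eq_comm]

theorem injective_smul_mk' [IsDomain A] (hf : f ≠ 0) (hr : r ≠ 0) :
    Function.Injective fun a : A =>
      a • IsLocalization.mk' L r (⟨f, Submonoid.mem_powers f⟩ : Submonoid.powers f) := by
  intro a b hab
  have h := congrArg (algebraMap A L f * ·) hab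
  simp only [algebraMap_mul_smul_mk', ← map_mul] at h
  exact mul_left_cancel₀ hr
    (IsLocalization.injective L (powers_le_nonZeroDivisors_of_noZeroDivisors hf) h)

end MOset

open UniqueFactorizationMonoid in
/-- if `A` is a UFD and `f ≠ 0`, then `√(fA)` is principal, say `(r)`,
`MO(A,f)` is the cyclic `A`-submodule of `A[f⁻¹]` generated by `r/f`, and
`a ↦ a • (r/f)` is injective, so `MO(A,f)` is free of rank one. Explicitly, if
`f = c·∏ pᵢ^{mᵢ}` with `c` a unit, the `pᵢ` pairwise non-associated irreducibles and
`mᵢ > 0`, then `MO(A,f) = (1/∏ pᵢ^{mᵢ-1})·A` inside `A[f⁻¹]`. -/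
theorem stmt10 {A : Type*} [CommRing A] [IsDomain A] [UniqueFactorizationMonoid A]
    (f : A) (hf : f ≠ 0) :
    (∃ r : A,
      (Ideal.span {f}).radical = Ideal.span {r} ∧
      MOset (algebraMap A (Localization.Away f)) f =
        Set.range (fun a : A =>
          a • IsLocalization.mk' (Localization.Away f) r
            (⟨f, Submonoid.mem_powers f⟩ : Submonoid.powers f)) ∧
      Function.Injective (fun a : A =>
        a • IsLocalization.mk' (Localization.Away f) r
          (⟨f, Submonoid.mem_powers f⟩ : Submonoid.powers f))) ∧
    ∀ (n : ℕ) (c : A) (p : Fin n → A) (m : Fin n → ℕ),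
      IsUnit c → (∀ i, Irreducible (p i)) →
      (∀ i j, i ≠ j → ¬ Associated (p i) (p j)) →
      (∀ i, 0 < m i) →
      f = c * ∏ i, p i ^ m i →
      MOset (algebraMap A (Localization.Away f)) f =
        {x | ∃ a : A,
          algebraMap A (Localization.Away f) (∏ i, p i ^ (m i - 1)) * x =
            algebraMap A (Localization.Away f) a} := by
  let := UniqueFactorizationMonoid.strongNormalizationMonoid (α := A)
  have hrad := radical_span_singleton_eq_span_radical hf
  refine ⟨⟨radical f, hrad, MOset_eq_range_smul_mk' hrad,
    injective_smul_mk' hf radical_ne_zero⟩, fun n c p m hc hp hass hm hfac => ?_⟩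
  have hrad' : (Ideal.span {f}).radical = Ideal.span {c * ∏ i, p i} := by
    rw [hrad, Ideal.span_singleton_eq_span_singleton, hfac]
    exact (associated_radical_unit_mul_prod_pow hc hp hass fun i => (hm i).ne').trans
      (associated_unit_mul_right _ _ hc)
  refine MOset_eq_of_radical_eq_span_of_eq_mul hrad' ?_
  rw [hfac, mul_left_comm, ← Finset.prod_mul_distrib]
  congr 2 with i
  rw [← pow_succ, Nat.sub_add_cancel (hm i)]
end
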